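/- Let K be a field and n ≥ 1. Let G = Sp_{2n}(K), let P₀ = {α ∈ G : c_α = 0} be the Siegel parabolic, let v ∈ K^{2n} be the last standard basis vector, and let P' = {α ∈ G : α·v ∈ K·v and α·v ≠ 0} be the stabilizer in G of the line K·v (the Klingen parabolic of corank one). Then for every g ∈ G there exist π ∈ P₀ and γ ∈ P' such that g = π·γ or g = π·η_n·γ, where η_n = (0 −I_n; I_n 0). -/
import Mathlib


open Matrix

/-- The matrix `η_n = (0 −I_n; I_n 0)`. -/
def symJ (n : ℕ) (K : Type*) [CommRing K] :
    Matrix (Fin n ⊕ Fin n) (Fin n ⊕ Fin n) K :=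
  Matrix.fromBlocks 0 (-1) 1 0

/-- The symplectic group `Sp_{2n}(K) = {α : ᵀα η_n α = η_n}`. -/
def Sp (n : ℕ) (K : Type*) [CommRing K] :
    Set (Matrix (Fin n ⊕ Fin n) (Fin n ⊕ Fin n) K) :=
  {α | αᵀ * symJ n K * α = symJ n K}

/-- The last standard basis vector of `K^{2n}`. -/
def lastBasisVec (n : ℕ) (K : Type*) [CommRing K] (hn : 1 ≤ n) : Fin n ⊕ Fin n → K :=
  Pi.single (Sum.inr ⟨n - 1, by omega⟩) 1

section helpers
variable {K : Type*} [Field K] {n : ℕ}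

lemma my_vecMulVec_mulVec (u s y : Fin n → K) :
    Matrix.vecMulVec u s *ᵥ y = (s ⬝ᵥ y) • u := by
  ext i
  simp only [Matrix.mulVec, dotProduct, Matrix.vecMulVec_apply, Pi.smul_apply,
    smul_eq_mul, Finset.sum_mul]
  exact Finset.sum_congr rfl fun k _ => by ring

lemma exists_col (i : Fin n) (w : Fin n → K) (hw : w ≠ 0) :
    ∃ M : Matrix (Fin n) (Fin n) K, IsUnit M.det ∧ M *ᵥ Pi.single i 1 = w := by
  obtain ⟨j, hj'⟩ := Function.ne_iff.mp hw
  have hj : w j ≠ 0 := by simpa using hj'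
  set A := (1 : Matrix (Fin n) (Fin n) K).updateCol j w with hA
  have hdet : A.det = w j := by
    rw [hA, ← Matrix.cramer_apply, Matrix.cramer_one]
    rfl
  refine ⟨A.submatrix id (Equiv.swap i j), ?_, ?_⟩
  · rw [Matrix.det_permute', hdet, isUnit_iff_ne_zero]
    rcases Int.units_eq_one_or (Equiv.Perm.sign (Equiv.swap i j)) with h | h <;>
      simp [h, hj]
  · ext r
    simp [Matrix.mulVec_single, Matrix.submatrix_apply, Equiv.swap_apply_left, hA,
      Matrix.updateCol_apply]

lemma exists_symm (y x : Fin n → K) (hy : y ≠ 0) :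
    ∃ b : Matrix (Fin n) (Fin n) K, bᵀ = b ∧ b *ᵥ y = x := by
  obtain ⟨j, hj'⟩ := Function.ne_iff.mp hy
  have hj : y j ≠ 0 := by simpa using hj'
  set z : Fin n → K := (y j)⁻¹ • (Pi.single j 1 : Fin n → K) with hz
  have hzy : z ⬝ᵥ y = 1 := by
    simp [hz, smul_dotProduct, single_dotProduct, inv_mul_cancel₀, hj]
  refine ⟨Matrix.vecMulVec x z + Matrix.vecMulVec z x - (x ⬝ᵥ y) • Matrix.vecMulVec z z,
    ?_, ?_⟩
  · ext r c
    simp [Matrix.vecMulVec_apply]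
    ring
  · rw [Matrix.sub_mulVec, Matrix.add_mulVec, my_vecMulVec_mulVec, my_vecMulVec_mulVec,
      Matrix.smul_mulVec, my_vecMulVec_mulVec, hzy]
    simp [smul_smul, mul_comm]

lemma J_mem : symJ n K ∈ Sp n K := by
  show _ = _
  simp [symJ, Matrix.fromBlocks_transpose, Matrix.fromBlocks_multiply]

lemma J_mul_neg_J : symJ n K * -(symJ n K) = 1 := by
  rw [mul_neg, symJ, Matrix.fromBlocks_multiply]
  ext (r|r) (c|c) <;> simp [Matrix.fromBlocks, Matrix.one_apply]

lemma neg_J_mul_J : -(symJ n K) * symJ n K = 1 := by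
  rw [neg_mul, symJ, Matrix.fromBlocks_multiply]
  ext (r|r) (c|c) <;> simp [Matrix.fromBlocks, Matrix.one_apply]

lemma isUnit_J : IsUnit (symJ n K) :=
  ⟨⟨symJ n K, -(symJ n K), J_mul_neg_J, neg_J_mul_J⟩, rfl⟩

lemma sp_isUnit {g : Matrix (Fin n ⊕ Fin n) (Fin n ⊕ Fin n) K} (hg : g ∈ Sp n K) :
    IsUnit g.det := by
  have hJ : IsUnit (symJ n K).det := (Matrix.isUnit_iff_isUnit_det _).mp isUnit_J
  have h := congrArg Matrix.det hg
  rw [Matrix.det_mul, Matrix.det_mul, Matrix.det_transpose] at h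
  rw [isUnit_iff_ne_zero]
  intro h0
  rw [h0] at h
  simp at h
  exact isUnit_iff_ne_zero.mp hJ h.symm

lemma sp_mul {a b : Matrix (Fin n ⊕ Fin n) (Fin n ⊕ Fin n) K}
    (ha : a ∈ Sp n K) (hb : b ∈ Sp n K) : a * b ∈ Sp n K := by
  have ha' : aᵀ * symJ n K * a = symJ n K := ha
  have hb' : bᵀ * symJ n K * b = symJ n K := hb
  show (a * b)ᵀ * symJ n K * (a * b) = symJ n K
  rw [Matrix.transpose_mul]
  calc bᵀ * aᵀ * symJ n K * (a * b) = bᵀ * (aᵀ * symJ n K * a) * b := by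
        noncomm_ring
    _ = symJ n K := by rw [ha', hb']
lemma sp_inv {a : Matrix (Fin n ⊕ Fin n) (Fin n ⊕ Fin n) K} (ha : a ∈ Sp n K) :
    a⁻¹ ∈ Sp n K := by
  have hu := sp_isUnit ha
  have ha' : aᵀ * symJ n K * a = symJ n K := ha
  show (a⁻¹)ᵀ * symJ n K * a⁻¹ = symJ n K
  calc (a⁻¹)ᵀ * symJ n K * a⁻¹ = (a⁻¹)ᵀ * (aᵀ * symJ n K * a) * a⁻¹ := by rw [ha']
    _ = ((a * a⁻¹)ᵀ) * symJ n K * (a * a⁻¹) := by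
        rw [Matrix.transpose_mul]; noncomm_ring
    _ = symJ n K := by rw [Matrix.mul_nonsing_inv a hu]; simp

lemma siegel_mem (a d b : Matrix (Fin n) (Fin n) K) (had : aᵀ * d = 1)
    (hda : dᵀ * a = 1) (hsymm : bᵀ = b) :
    Matrix.fromBlocks a (b * d) 0 d ∈ Sp n K := by
  show _ = _
  simp only [symJ, Matrix.fromBlocks_transpose, Matrix.fromBlocks_multiply,
    Matrix.transpose_zero, Matrix.transpose_mul]
  simp only [Matrix.mul_zero, Matrix.zero_mul, Matrix.mul_one, Matrix.mul_neg,
    Matrix.neg_mul, Matrix.one_mul, add_zero, zero_add, Matrix.mul_assoc]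
  rw [had, hda, hsymm]
  simp
end helpers

/-- Bruhat-type decomposition `Sp_{2n}(K) = P₀ P' ∪ P₀ η_n P'`, where `P₀` is the Siegel
parabolic (block `c = 0`) and `P'` is the Klingen parabolic of corank one (the stabilizer
of the line spanned by the last standard basis vector). -/
theorem sp_bruhat_decomposition (K : Type*) [Field K] (n : ℕ) (hn : 1 ≤ n)
    (g : Matrix (Fin n ⊕ Fin n) (Fin n ⊕ Fin n) K) (hg : g ∈ Sp n K) :
    ∃ π ∈ Sp n K, ∃ γ ∈ Sp n K,
      π.toBlocks₂₁ = 0 ∧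
      (∃ k : K, γ.mulVec (lastBasisVec n K hn) = k • lastBasisVec n K hn) ∧
      γ.mulVec (lastBasisVec n K hn) ≠ 0 ∧
      (g = π * γ ∨ g = π * symJ n K * γ) := by
  set i0 : Fin n := ⟨n - 1, by omega⟩ with hi0
  have hv : lastBasisVec n K hn = Sum.elim (0 : Fin n → K) (Pi.single i0 1) := by
    ext (r | r) <;> simp [lastBasisVec, hi0, Pi.single_apply]
  have hvne : lastBasisVec n K hn ≠ 0 := by
    intro h
    have h1 := congrFun h (Sum.inr i0)
    simp [lastBasisVec, hi0] at h1
  have hdetg := sp_isUnit hg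
  set u : Fin n ⊕ Fin n → K := g *ᵥ lastBasisVec n K hn with hu
  have hune : u ≠ 0 := by
    intro h
    apply hvne
    have h1 : g⁻¹ *ᵥ (g *ᵥ lastBasisVec n K hn) = 0 := by rw [← hu, h, Matrix.mulVec_zero]
    rwa [Matrix.mulVec_mulVec, Matrix.nonsing_inv_mul g hdetg, Matrix.one_mulVec] at h1
  set u1 : Fin n → K := u ∘ Sum.inl with hu1
  set u2 : Fin n → K := u ∘ Sum.inr with hu2
  have huelim : u = Sum.elim u1 u2 := (Sum.elim_comp_inl_inr u).symm
  suffices h : ∃ π ∈ Sp n K, ∃ P ∈ Sp n K, π.toBlocks₂₁ = 0 ∧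
      P *ᵥ lastBasisVec n K hn = u ∧ (P = π ∨ P = π * symJ n K) by
    obtain ⟨π, hπ, P, hP, h21, hPv, hPe⟩ := h
    have hPdet := sp_isUnit hP
    have hγ : P⁻¹ * g ∈ Sp n K := sp_mul (sp_inv hP) hg
    have hγv : (P⁻¹ * g) *ᵥ lastBasisVec n K hn = lastBasisVec n K hn := by
      rw [← Matrix.mulVec_mulVec, ← hu, ← hPv, Matrix.mulVec_mulVec,
        Matrix.nonsing_inv_mul P hPdet, Matrix.one_mulVec]
    have hgPγ : g = P * (P⁻¹ * g) := by
      rw [← Matrix.mul_assoc, Matrix.mul_nonsing_inv P hPdet, Matrix.one_mul]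
    refine ⟨π, hπ, P⁻¹ * g, hγ, h21, ⟨1, by rw [hγv, one_smul]⟩,
      by rw [hγv]; exact hvne, ?_⟩
    rcases hPe with rfl | rfl
    · exact Or.inl hgPγ
    · exact Or.inr hgPγ
  by_cases h2 : u2 = 0
  · -- the η cell: u = (u1, 0)
    have h1 : u1 ≠ 0 := by
      intro h
      apply hune
      rw [huelim, h, h2]
      ext (r | r) <;> simp
    obtain ⟨a, hadet, hav⟩ := exists_col i0 (-u1) (neg_ne_zero.mpr h1)
    have hadet' : IsUnit aᵀ.det := by rwa [Matrix.det_transpose]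
    have had : aᵀ * (aᵀ)⁻¹ = 1 := Matrix.mul_nonsing_inv _ hadet'
    have hdT : ((aᵀ)⁻¹)ᵀ = a⁻¹ := by
      rw [Matrix.transpose_nonsing_inv, Matrix.transpose_transpose]
    have hda : ((aᵀ)⁻¹)ᵀ * a = 1 := by rw [hdT, Matrix.nonsing_inv_mul a hadet]
    set π := Matrix.fromBlocks a ((0 : Matrix (Fin n) (Fin n) K) * (aᵀ)⁻¹) 0 (aᵀ)⁻¹ with hπd
    have hπ : π ∈ Sp n K := siegel_mem a ((aᵀ)⁻¹) 0 had hda (by simp)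
    refine ⟨π, hπ, π * symJ n K, sp_mul hπ J_mem, by simp [hπd], ?_, Or.inr rfl⟩
    have hJv : symJ n K *ᵥ lastBasisVec n K hn = Sum.elim (-(Pi.single i0 1 : Fin n → K)) 0 := by
      rw [hv, symJ, Matrix.fromBlocks_mulVec]
      ext (r | r) <;> simp [Pi.single_apply, Matrix.neg_mulVec, Matrix.one_mulVec]
    rw [← Matrix.mulVec_mulVec, hJv, hπd, Matrix.fromBlocks_mulVec]
    simp only [Sum.elim_comp_inl, Sum.elim_comp_inr, Matrix.mulVec_zero, Matrix.zero_mul,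
      Matrix.mulVec_neg, hav, add_zero, zero_add, neg_neg]
    rw [huelim, h2]
    ext (r | r) <;> simp
  · -- the identity cell: u2 ≠ 0
    obtain ⟨c, hcdet, hcv⟩ := exists_col i0 u2 h2
    obtain ⟨b, hbsymm, hbv⟩ := exists_symm u2 u1 h2
    have hcTdet : IsUnit cᵀ.det := by rwa [Matrix.det_transpose]
    have haT : ((cᵀ)⁻¹)ᵀ = c⁻¹ := by
      rw [Matrix.transpose_nonsing_inv, Matrix.transpose_transpose]
    have had : ((cᵀ)⁻¹)ᵀ * c = 1 := by rw [haT, Matrix.nonsing_inv_mul c hcdet]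
    have hda : cᵀ * (cᵀ)⁻¹ = 1 := Matrix.mul_nonsing_inv _ hcTdet
    set π := Matrix.fromBlocks ((cᵀ)⁻¹) (b * c) 0 c with hπd
    have hπ : π ∈ Sp n K := siegel_mem ((cᵀ)⁻¹) c b had hda hbsymm
    refine ⟨π, hπ, π, hπ, by simp [hπd], ?_, Or.inl rfl⟩
    rw [hv, hπd, Matrix.fromBlocks_mulVec]
    simp only [Sum.elim_comp_inl, Sum.elim_comp_inr, Matrix.mulVec_zero, zero_add,
      ← Matrix.mulVec_mulVec, hcv, hbv]
    rw [huelim]
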